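/- Let p < q < r be primes and n = pqr. Then the independent domination polynomial of the comaximal graph Γ(ℤ_n) is D_i(Γ(ℤ_n), x) = φ(n)·x + x^{p+q+r−2} + x^{pq} + x^{pr} + x^{qr}. -/

import Mathlib

/-!
Let `z a` be the set of prime factors of `n = pqr` dividing `a`. Distinct `a, b` are comaximal
exactly when `z a` and `z b` are disjoint, and every subset of `{p, q, r}` is some `z a`. In such a
graph an independent dominating set `S` is of one of three kinds: if some `u ∈ S` has `z u = ∅`
(a unit) then `S = {u}`; if the supports of the members of `S` share a prime `i` then `S` is the
set of all multiples of `i`; otherwise every member of `S` is divisible by two of the primes, and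
since two 2-subsets of a 3-set meet, `S` is the set of all such elements. There are `φ(n)` sets
of the first kind, the second kind has sizes `qr, pr, pq`, and the last set has `p + q + r - 2`
elements by inclusion-exclusion over the multiples of `pq, pr, qr`.
-/

open Polynomial

/-- The comaximal graph of `ℤ/nℤ`: distinct `a, b` are adjacent iff the ideal
generated by `a` and `b` is the whole ring. -/
def comaximalGraph (n : ℕ) : SimpleGraph (ZMod n) where
  Adj a b := a ≠ b ∧ Ideal.span ({a, b} : Set (ZMod n)) = ⊤
  symm := by
    constructor
    rintro a b ⟨hab, h⟩
    refine ⟨hab.symm, ?_⟩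
    rwa [Set.pair_comm]
  loopless := by
    constructor
    rintro a ⟨h, -⟩
    exact h rfl

/-- `S` is an independent dominating set of `G`. -/
def IsIndepDomSet {V : Type*} (G : SimpleGraph V) (S : Finset V) : Prop :=
  (∀ a ∈ S, ∀ b ∈ S, ¬ G.Adj a b) ∧ ∀ v : V, v ∉ S → ∃ u ∈ S, G.Adj u v

/-- The independent domination polynomial `D_i(G, x) = Σ_k d_i(G,k) x^k`. -/
noncomputable def indepDomPoly {V : Type*} (G : SimpleGraph V) : Polynomial ℝ :=
  ∑ k ∈ Finset.range (Nat.card V + 1),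
    Polynomial.C ((Nat.card {S : Finset V // IsIndepDomSet G S ∧ S.card = k}) : ℝ) *
      Polynomial.X ^ k

/-- The independence polynomial `I(G, x) = Σ_k c_k x^k`. -/
noncomputable def indepPoly {V : Type*} (G : SimpleGraph V) : Polynomial ℝ :=
  ∑ k ∈ Finset.range (Nat.card V + 1),
    Polynomial.C ((Nat.card {S : Finset V //
        (∀ a ∈ S, ∀ b ∈ S, ¬ G.Adj a b) ∧ S.card = k}) : ℝ) *
      Polynomial.X ^ k

open Finset

theorem indepDomPoly_eq_sum {V : Type*} [Fintype V] (G : SimpleGraph V)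
    [DecidablePred (IsIndepDomSet G)] :
    indepDomPoly G = ∑ S with IsIndepDomSet G S, X ^ #S := by
  rw [← sum_fiberwise_of_maps_to (t := range (Fintype.card V + 1)) (g := card)
    (fun S _ => mem_range.2 (Nat.lt_succ_of_le (card_le_univ S))), indepDomPoly,
    Nat.card_eq_fintype_card]
  refine sum_congr rfl fun k _ => ?_
  rw [filter_filter, sum_congr rfl fun S hS => by rw [(mem_filter.1 hS).2.2], sum_const,
    nsmul_eq_mul, Nat.card_eq_fintype_card, Fintype.card_subtype, map_natCast]

theorem IsIndepDomSet.eq_of_subset {V : Type*} {G : SimpleGraph V} {S T : Finset V}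
    (hS : IsIndepDomSet G S) (hT : IsIndepDomSet G T) (hST : S ⊆ T) : S = T := by
  refine hST.antisymm fun a haT => ?_
  by_contra haS
  obtain ⟨u, huS, hua⟩ := hS.2 a haS
  exact hT.1 u (hST huS) a haT hua

section DisjointGraph

variable {V ι : Type*}

def disjointGraph (z : V → Finset ι) : SimpleGraph V where
  Adj a b := a ≠ b ∧ Disjoint (z a) (z b)
  symm := ⟨fun _ _ h => ⟨h.1.symm, h.2.symm⟩⟩
  loopless := ⟨fun _ h => h.1 rfl⟩

variable {z : V → Finset ι}

@[simp]
theorem disjointGraph_adj {a b : V} : (disjointGraph z).Adj a b ↔ a ≠ b ∧ Disjoint (z a) (z b) :=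
  Iff.rfl

theorem isIndepDomSet_disjointGraph_singleton {u : V} (hu : z u = ∅) :
    IsIndepDomSet (disjointGraph z) {u} := by
  refine ⟨by simp, fun v hv => ⟨u, mem_singleton_self u, ?_, by simp [hu]⟩⟩
  rintro rfl
  exact hv (mem_singleton_self u)

variable [Fintype V] [DecidableEq ι]

theorem isIndepDomSet_disjointGraph_filter_mem {i : ι} (hi : ∃ u, z u = {i}) :
    IsIndepDomSet (disjointGraph z) {a | i ∈ z a} := by
  obtain ⟨u, hu⟩ := hi
  refine ⟨fun a ha b hb hab => ?_, fun v hv => ⟨u, by simp [hu], ?_, ?_⟩⟩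
  · simp only [mem_filter, mem_univ, true_and] at ha hb
    exact disjoint_left.1 hab.2 ha hb
  · rintro rfl
    simp [hu] at hv
  · simpa [hu] using hv

variable {P : Finset ι}

theorem isIndepDomSet_disjointGraph_filter_two_le (hP : #P = 3) (hz : ∀ a, z a ⊆ P)
    (hsurj : ∀ s ⊆ P, ∃ u, z u = s) :
    IsIndepDomSet (disjointGraph z) {a | 2 ≤ #(z a)} := by
  refine ⟨fun a ha b hb hab => ?_, fun v hv => ?_⟩
  · simp only [mem_filter, mem_univ, true_and] at ha hb
    obtain ⟨i, hi⟩ := inter_nonempty_of_card_lt_card_add_card (hz a) (hz b) (by omega)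
    exact disjoint_left.1 hab.2 (mem_inter.1 hi).1 (mem_inter.1 hi).2
  · simp only [mem_filter, mem_univ, true_and, not_le] at hv
    obtain ⟨j, hjP, hvj⟩ : ∃ j ∈ P, z v ⊆ {j} := by
      rcases (z v).eq_empty_or_nonempty with h | ⟨j, hj⟩
      · obtain ⟨j, hj⟩ := card_pos.1 (hP ▸ three_pos : 0 < #P)
        exact ⟨j, hj, by simp [h]⟩
      · exact ⟨j, hz v hj, fun k hk => mem_singleton.2 (card_le_one.1 (by omega) k hk j hj)⟩
    obtain ⟨u, hu⟩ := hsurj (P.erase j) (erase_subset j P)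
    have hu2 : #(z u) = 2 := by rw [hu, card_erase_of_mem hjP, hP]
    refine ⟨u, by simp [hu2], fun huv => by rw [huv] at hu2; omega, ?_⟩
    rw [hu]
    exact disjoint_of_subset_right hvj (disjoint_singleton_right.2 (notMem_erase j P))

theorem IsIndepDomSet.disjointGraph_trichotomy {S : Finset V} (hP : #P = 3) (hz : ∀ a, z a ⊆ P)
    (hsurj : ∀ s ⊆ P, ∃ u, z u = s) (hS : IsIndepDomSet (disjointGraph z) S) :
    (∃ u, z u = ∅ ∧ S = {u}) ∨ (∃ i ∈ P, S = ({a | i ∈ z a} : Finset V)) ∨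
      S = ({a | 2 ≤ #(z a)} : Finset V) := by
  by_cases hunit : ∃ u ∈ S, z u = ∅
  · obtain ⟨u, huS, hu⟩ := hunit
    exact Or.inl ⟨u, hu, ((isIndepDomSet_disjointGraph_singleton hu).eq_of_subset hS
      (singleton_subset_iff.2 huS)).symm⟩
  by_cases hcommon : ∃ i ∈ P, ∀ a ∈ S, i ∈ z a
  · obtain ⟨i, hiP, hi⟩ := hcommon
    refine Or.inr (Or.inl ⟨i, hiP, hS.eq_of_subset ?_ fun a ha => by simpa using hi a ha⟩)
    exact isIndepDomSet_disjointGraph_filter_mem (hsurj {i} (singleton_subset_iff.2 hiP))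
  refine Or.inr (Or.inr (hS.eq_of_subset (isIndepDomSet_disjointGraph_filter_two_le hP hz hsurj)
    fun a ha => ?_))
  push Not at hunit hcommon
  obtain ⟨j, hj⟩ := hunit a ha
  by_contra hlt
  have hzj : z a = {j} := eq_singleton_iff_unique_mem.2 ⟨hj, fun k hk =>
    card_le_one.1 (by simp only [mem_filter, mem_univ, true_and, not_le] at hlt; omega) k hk j hj⟩
  obtain ⟨b, hb, hjb⟩ := hcommon j (hz a hj)
  refine hS.1 a ha b hb ⟨fun hab => hjb (hab ▸ hj), ?_⟩
  rwa [hzj, disjoint_singleton_left]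

theorem isIndepDomSet_disjointGraph_iff {S : Finset V} (hP : #P = 3) (hz : ∀ a, z a ⊆ P)
    (hsurj : ∀ s ⊆ P, ∃ u, z u = s) :
    IsIndepDomSet (disjointGraph z) S ↔ (∃ u, z u = ∅ ∧ S = {u}) ∨
      (∃ i ∈ P, S = ({a | i ∈ z a} : Finset V)) ∨ S = ({a | 2 ≤ #(z a)} : Finset V) := by
  refine ⟨IsIndepDomSet.disjointGraph_trichotomy hP hz hsurj, ?_⟩
  rintro (⟨u, hu, rfl⟩ | ⟨i, hi, rfl⟩ | rfl)
  · exact isIndepDomSet_disjointGraph_singleton hu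
  · exact isIndepDomSet_disjointGraph_filter_mem (hsurj {i} (singleton_subset_iff.2 hi))
  · exact isIndepDomSet_disjointGraph_filter_two_le hP hz hsurj

theorem indepDomPoly_disjointGraph (hP : #P = 3) (hz : ∀ a, z a ⊆ P)
    (hsurj : ∀ s ⊆ P, ∃ u, z u = s) :
    indepDomPoly (disjointGraph z) = (#{u | z u = ∅} : ℝ[X]) * X +
      ∑ i ∈ P, X ^ #{a | i ∈ z a} + X ^ #{a | 2 ≤ #(z a)} := by
  classical
  set A : ι → Finset V := fun i => {a | i ∈ z a}
  set T : Finset V := {a | 2 ≤ #(z a)}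
  have hsep : ∀ i ∈ P, ∃ u, u ∈ A i ∧ u ∉ T ∧ ∀ j, u ∈ A j → j = i := fun i hi => by
    obtain ⟨u, hu⟩ := hsurj {i} (singleton_subset_iff.2 hi)
    exact ⟨u, by simp [A, hu], by simp [T, hu], fun j => by simp [A, hu]⟩
  have hunits :
      Disjoint (({u | z u = ∅} : Finset V).map ⟨singleton, singleton_injective⟩) (P.image A) := by
    simp only [disjoint_left, mem_map, mem_image, mem_filter, mem_univ, true_and]
    rintro _ ⟨u, hu, rfl⟩ ⟨i, -, hi⟩
    simpa [A, hu] using hi.symm.subset (mem_singleton_self u)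
  have hT : T ∉ ({u | z u = ∅} : Finset V).map ⟨singleton, singleton_injective⟩ ∪ P.image A := by
    simp only [mem_union, mem_map, mem_image, mem_filter, mem_univ, true_and, not_or, not_exists,
      not_and]
    refine ⟨fun u hu hT => ?_, fun i hi hT => ?_⟩
    · simpa [T, hu] using hT.subset (mem_singleton_self u)
    · obtain ⟨u, hui, huT, -⟩ := hsep i hi
      exact huT (hT ▸ hui)
  have hinj : Set.InjOn A P := fun i hi j _ hij => by
    obtain ⟨u, hui, -, hu⟩ := hsep i hi
    exact (hu j (hij ▸ hui)).symm
  have hIDS : ({S | IsIndepDomSet (disjointGraph z) S} : Finset (Finset V)) =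
      insert T (({u | z u = ∅} : Finset V).map ⟨singleton, singleton_injective⟩ ∪ P.image A) := by
    ext S
    simp only [mem_filter, mem_univ, true_and, isIndepDomSet_disjointGraph_iff hP hz hsurj,
      mem_insert, mem_union, mem_map, mem_image, Function.Embedding.coeFn_mk]
    aesop
  rw [indepDomPoly_eq_sum, hIDS, sum_insert hT, sum_union hunits, sum_map, sum_image hinj]
  simp only [Function.Embedding.coeFn_mk, card_singleton, pow_one, sum_const, nsmul_eq_mul]
  ring

end DisjointGraph

namespace ZMod

theorem span_pair_eq_top_iff {n : ℕ} [NeZero n] (a b : ZMod n) :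
    Ideal.span {a, b} = ⊤ ↔ (a.val.gcd b.val).Coprime n := by
  have hmap : Ideal.span {a, b} =
      (Ideal.span {((a.val.gcd b.val : ℕ) : ℤ)}).map (Int.castRingHom (ZMod n)) := by
    rw [← Int.gcd_natCast_natCast, Int.coe_gcd, span_gcd, Ideal.map_span, Set.image_pair]
    simp
  rw [hmap, Ideal.map_span, Set.image_singleton, Ideal.span_singleton_eq_top]
  simpa using ZMod.isUnit_iff_coprime _ n

theorem card_filter_dvd_val {n d m : ℕ} [NeZero n] (h : d * m = n) :
    #{a : ZMod n | d ∣ a.val} = m := by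
  have hd : 0 < d := Nat.pos_of_ne_zero (by rintro rfl; exact NeZero.ne n (by simp [← h]))
  have hlt : ∀ k < m, d * k < n := fun k hk => h ▸ Nat.mul_lt_mul_of_pos_left hk hd
  have himage : ({a : ZMod n | d ∣ a.val} : Finset _) =
      (range m).image (fun k => ((d * k : ℕ) : ZMod n)) := by
    ext a
    simp only [mem_filter, mem_univ, true_and, mem_image, mem_range]
    constructor
    · rintro ⟨k, hk⟩
      refine ⟨k, Nat.lt_of_mul_lt_mul_left (a := d) ?_, by rw [← hk, natCast_zmod_val]⟩
      rw [← hk, h]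
      exact a.val_lt
    · rintro ⟨k, hk, rfl⟩
      rw [val_cast_of_lt (hlt k hk)]
      exact dvd_mul_right d k
  rw [himage, card_image_of_injOn, card_range]
  intro k hk l hl hkl
  have := congrArg val hkl
  rw [val_cast_of_lt (hlt k (mem_range.1 hk)), val_cast_of_lt (hlt l (mem_range.1 hl))] at this
  exact Nat.eq_of_mul_eq_mul_left hd this

theorem card_filter_isUnit (n : ℕ) [NeZero n] : #{a : ZMod n | IsUnit a} = n.totient := by
  rw [← ZMod.card_units_eq_totient, ← Fintype.card_subtype]
  exact Fintype.card_congr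
    { toFun := fun u => u.2.unit
      invFun := fun u => ⟨u, u.isUnit⟩
      left_inv := fun u => by simp
      right_inv := fun u => by ext; simp }

theorem filter_dvd_val_inter_filter_dvd_val {n d e : ℕ} [NeZero n] (h : d.lcm e = n) :
    ({a | d ∣ a.val} : Finset (ZMod n)) ∩ ({a | e ∣ a.val} : Finset (ZMod n)) = {0} := by
  ext a
  rw [← filter_and, mem_filter, mem_singleton, ← Nat.lcm_dvd_iff, h, ← natCast_eq_zero_iff,
    natCast_zmod_val]
  simp

end ZMod

theorem Finset.card_union_union_add_two {α : Type*} [DecidableEq α] {s t u : Finset α} {x : α}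
    (hst : s ∩ t = {x}) (hsu : s ∩ u = {x}) (htu : t ∩ u = {x}) :
    #(s ∪ t ∪ u) + 2 = #s + #t + #u := by
  have h₁ := card_union_add_card_inter s t
  have h₂ := card_union_add_card_inter (s ∪ t) u
  rw [union_inter_distrib_right, hsu, htu, union_self, card_singleton] at h₂
  rw [hst, card_singleton] at h₁
  omega

theorem two_le_card_filter_dvd_iff {p q r : ℕ} (hpq : p ≠ q) (hpr : p ≠ r) (hqr : q ≠ r) (v : ℕ) :
    2 ≤ #{s ∈ ({p, q, r} : Finset ℕ) | s ∣ v} ↔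
      (p ∣ v ∧ q ∣ v) ∨ (p ∣ v ∧ r ∣ v) ∨ (q ∣ v ∧ r ∣ v) := by
  by_cases hp : p ∣ v <;> by_cases hq : q ∣ v <;> by_cases hr : r ∣ v <;>
    simp [filter_insert, filter_singleton, hp, hq, hr, hpq, hpr, hqr]

theorem Nat.primeFactors_mul_mul_of_prime {p q r : ℕ} (hp : p.Prime) (hq : q.Prime) (hr : r.Prime) :
    (p * q * r).primeFactors = {p, q, r} := by
  rw [Nat.primeFactors_mul (by simp [hp.ne_zero, hq.ne_zero]) hr.ne_zero,
    Nat.primeFactors_mul hp.ne_zero hq.ne_zero, hp.primeFactors, hq.primeFactors, hr.primeFactors]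
  ext; simp

def primeSupport (n : ℕ) (a : ZMod n) : Finset ℕ := {p ∈ n.primeFactors | p ∣ a.val}

theorem exists_primeSupport_eq {n : ℕ} {s : Finset ℕ} (hs : s ⊆ n.primeFactors) :
    ∃ u : ZMod n, primeSupport n u = s := by
  refine ⟨((∏ p ∈ s, p : ℕ) : ZMod n), ?_⟩
  ext p
  simp only [primeSupport, mem_filter, ZMod.val_natCast]
  constructor
  · rintro ⟨hp, hdvd⟩
    rw [Nat.dvd_mod_iff (Nat.dvd_of_mem_primeFactors hp)] at hdvd
    obtain ⟨q, hq, hpq⟩ := ((Nat.prime_of_mem_primeFactors hp).prime.dvd_finsetProd_iff _).1 hdvd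
    rwa [(Nat.prime_dvd_prime_iff_eq (Nat.prime_of_mem_primeFactors hp)
      (Nat.prime_of_mem_primeFactors (hs hq))).1 hpq]
  · intro hp
    exact ⟨hs hp, (Nat.dvd_mod_iff (Nat.dvd_of_mem_primeFactors (hs hp))).2 (dvd_prod_of_mem _ hp)⟩

section PrimeSupport

variable {n : ℕ} [NeZero n]

theorem disjoint_primeSupport_iff (a b : ZMod n) :
    Disjoint (primeSupport n a) (primeSupport n b) ↔ (a.val.gcd b.val).Coprime n := by
  rw [primeSupport, primeSupport, disjoint_filter, ← not_iff_not, Nat.Prime.not_coprime_iff_dvd]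
  simp only [Nat.mem_primeFactors, Nat.dvd_gcd_iff, ne_eq, NeZero.ne n, not_false_eq_true,
    and_true, not_forall, not_not, exists_prop]
  exact exists_congr fun p => by tauto

theorem comaximalGraph_eq_disjointGraph : comaximalGraph n = disjointGraph (primeSupport n) := by
  ext a b
  simp [comaximalGraph, ZMod.span_pair_eq_top_iff, disjoint_primeSupport_iff]

theorem primeSupport_eq_empty_iff (a : ZMod n) : primeSupport n a = ∅ ↔ IsUnit a := by
  rw [← disjoint_self_iff_empty, disjoint_primeSupport_iff, Nat.gcd_self, ← ZMod.isUnit_iff_coprime,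
    ZMod.natCast_zmod_val]

theorem card_filter_primeSupport_eq_empty : #{a : ZMod n | primeSupport n a = ∅} = n.totient := by
  simp only [primeSupport_eq_empty_iff, ZMod.card_filter_isUnit]

theorem card_filter_mem_primeSupport {p m : ℕ} (hp : p.Prime) (h : p * m = n) :
    #{a : ZMod n | p ∈ primeSupport n a} = m := by
  have hpn : p ∈ n.primeFactors := Nat.mem_primeFactors.2 ⟨hp, h ▸ dvd_mul_right p m, NeZero.ne n⟩
  simp only [primeSupport, mem_filter, hpn, true_and, ZMod.card_filter_dvd_val h]

end PrimeSupport

theorem card_filter_two_le_card_primeSupport {p q r n : ℕ} [NeZero n] (hp : p.Prime)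
    (hq : q.Prime) (hr : r.Prime) (hpq : p ≠ q) (hpr : p ≠ r) (hqr : q ≠ r) (hn : p * q * r = n) :
    #{a : ZMod n | 2 ≤ #(primeSupport n a)} = p + q + r - 2 := by
  subst hn
  have cpq := (Nat.coprime_primes hp hq).2 hpq
  have cpr := (Nat.coprime_primes hp hr).2 hpr
  have cqr := (Nat.coprime_primes hq hr).2 hqr
  have hdvd {x y v : ℕ} (h : x.Coprime y) : x * y ∣ v ↔ x ∣ v ∧ y ∣ v := by
    rw [← h.lcm_eq_mul, Nat.lcm_dvd_iff]
  set M : ℕ → Finset (ZMod (p * q * r)) := fun d => {a | d ∣ a.val}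
  have hT : ({a | 2 ≤ #(primeSupport _ a)} : Finset (ZMod (p * q * r))) =
      M (p * q) ∪ M (p * r) ∪ M (q * r) := by
    ext a
    simp only [M, primeSupport, Nat.primeFactors_mul_mul_of_prime hp hq hr, mem_filter, mem_univ,
      true_and, mem_union, two_le_card_filter_dvd_iff hpq hpr hqr, hdvd cpq, hdvd cpr, hdvd cqr,
      or_assoc]
  have key := card_union_union_add_two
    (ZMod.filter_dvd_val_inter_filter_dvd_val (n := p * q * r) (d := p * q) (e := p * r)
      (by rw [Nat.lcm_mul_left, cqr.lcm_eq_mul, mul_assoc]))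
    (ZMod.filter_dvd_val_inter_filter_dvd_val (n := p * q * r) (d := p * q) (e := q * r)
      (by rw [mul_comm p q, Nat.lcm_mul_left, cpr.lcm_eq_mul]; ring))
    (ZMod.filter_dvd_val_inter_filter_dvd_val (n := p * q * r) (d := p * r) (e := q * r)
      (by rw [Nat.lcm_mul_right, cpq.lcm_eq_mul]))
  rw [ZMod.card_filter_dvd_val (d := p * q) (m := r) rfl,
    ZMod.card_filter_dvd_val (d := p * r) (m := q) (by ring),
    ZMod.card_filter_dvd_val (d := q * r) (m := p) (by ring)] at key
  rw [hT]
  simp only [M]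
  omega

/-- For `n = pqr` with primes `p < q < r`,
`D_i(Γ(ℤ_n), x) = φ(n)·x + x^(p+q+r−2) + x^(pq) + x^(pr) + x^(qr)`. -/
theorem stmt_4 (p q r : ℕ) (hp : p.Prime) (hq : q.Prime) (hr : r.Prime)
    (hpq : p < q) (hqr : q < r) :
    indepDomPoly (comaximalGraph (p * q * r)) =
      Polynomial.C ((Nat.totient (p * q * r) : ℝ)) * Polynomial.X +
        Polynomial.X ^ (p + q + r - 2) + Polynomial.X ^ (p * q) +
        Polynomial.X ^ (p * r) + Polynomial.X ^ (q * r) := by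
  have hpr := hpq.trans hqr
  have : NeZero (p * q * r) := ⟨by simp [hp.ne_zero, hq.ne_zero, hr.ne_zero]⟩
  have hP := Nat.primeFactors_mul_mul_of_prime hp hq hr
  have hcard : #(p * q * r).primeFactors = 3 := by simp [hP, hpq.ne, hpr.ne, hqr.ne]
  rw [comaximalGraph_eq_disjointGraph, indepDomPoly_disjointGraph (z := primeSupport _) hcard
      (fun _ => filter_subset _ _) (fun _ => exists_primeSupport_eq),
    card_filter_primeSupport_eq_empty, hP,
    sum_insert (by simp [hpq.ne, hpr.ne]), sum_insert (by simp [hqr.ne]), sum_singleton,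
    card_filter_mem_primeSupport hp (m := q * r) (by ring),
    card_filter_mem_primeSupport hq (m := p * r) (by ring),
    card_filter_mem_primeSupport hr (m := p * q) (by ring),
    card_filter_two_le_card_primeSupport hp hq hr hpq.ne hpr.ne hqr.ne rfl, map_natCast]
  ring
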